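/- For the superalgebra S₇³ with products e₁e₁ = e₁, e₁f₁ = f₁e₁ = ½f₁, e₁f₂ = f₂e₁ = ½f₂, f₁f₂ = e₁ = −f₂f₁, the graded basis change E₁ᵗ = e₁, F₁ᵗ = f₁, F₂ᵗ = t·f₂ (t ≠ 0) yields structure constants converging as t → 0 to those of S₅³: E₁E₁ = E₁, E₁F₁ = ½F₁, E₁F₂ = ½F₂, F₁F₂ = 0. -/

import Mathlib

open Filter

/-- The multiplication of the (1,2)-superalgebra S₇³ on ℂ³ with coordinates (e₁; f₁, f₂):
e₁e₁ = e₁, e₁f₁ = f₁e₁ = ½f₁, e₁f₂ = f₂e₁ = ½f₂, f₁f₂ = e₁ = −f₂f₁. -/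
noncomputable def muS73 : ℂ × ℂ × ℂ → ℂ × ℂ × ℂ → ℂ × ℂ × ℂ :=
  fun x y => (x.1 * y.1 + (x.2.1 * y.2.2 - x.2.2 * y.2.1),
    (x.1 * y.2.1 + x.2.1 * y.1) / 2, (x.1 * y.2.2 + x.2.2 * y.1) / 2)

noncomputable def E1 : ℂ × ℂ × ℂ := (1, 0, 0)            -- E₁ = e₁
noncomputable def F1 : ℂ × ℂ × ℂ := (0, 1, 0)            -- F₁ = f₁
noncomputable def F2 (t : ℂ) : ℂ × ℂ × ℂ := (0, 0, t)    -- F₂ᵗ = t·f₂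

/-!
By bilinearity, every product involving `F₂ᵗ = t • f₂` is `t` times the corresponding product
with `f₂`. When that product is again a multiple of `f₂` (as `E₁F₂ᵗ = ½F₂ᵗ`) the structure
constant does not see `t`, but `F₁F₂ᵗ = t • e₁ = t • E₁` has structure constant `t → 0`.
-/

theorem muS73_smul_left (c : ℂ) (x y : ℂ × ℂ × ℂ) : muS73 (c • x) y = c • muS73 x y := by
  simp only [muS73, Prod.smul_fst, Prod.smul_snd, smul_eq_mul, Prod.smul_mk]
  ext <;> ring

theorem muS73_smul_right (c : ℂ) (x y : ℂ × ℂ × ℂ) : muS73 x (c • y) = c • muS73 x y := by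
  simp only [muS73, Prod.smul_fst, Prod.smul_snd, smul_eq_mul, Prod.smul_mk]
  ext <;> ring

theorem F2_eq_smul (t : ℂ) : F2 t = t • F2 1 := by
  simp [F2]

theorem muS73_E1_E1 : muS73 E1 E1 = E1 := by
  simp [muS73, E1]

theorem muS73_E1_F1 : muS73 E1 F1 = (1 / 2 : ℂ) • F1 := by
  simp [muS73, E1, F1]

theorem muS73_F1_E1 : muS73 F1 E1 = (1 / 2 : ℂ) • F1 := by
  simp [muS73, E1, F1]

theorem muS73_E1_F2_one : muS73 E1 (F2 1) = (1 / 2 : ℂ) • F2 1 := by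
  simp [muS73, E1, F2]

theorem muS73_F2_one_E1 : muS73 (F2 1) E1 = (1 / 2 : ℂ) • F2 1 := by
  simp [muS73, E1, F2]

theorem muS73_F1_F2_one : muS73 F1 (F2 1) = E1 := by
  simp [muS73, E1, F1, F2]

theorem muS73_F2_one_F1 : muS73 (F2 1) F1 = -E1 := by
  simp [muS73, E1, F1, F2]

theorem muS73_F1_F1 : muS73 F1 F1 = 0 := by
  simp [muS73, F1]

theorem muS73_F2_one_F2_one : muS73 (F2 1) (F2 1) = 0 := by
  simp [muS73, F2]

theorem muS73_E1_F2 (t : ℂ) : muS73 E1 (F2 t) = (1 / 2 : ℂ) • F2 t := by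
  rw [F2_eq_smul, muS73_smul_right, muS73_E1_F2_one, smul_comm]

theorem muS73_F2_E1 (t : ℂ) : muS73 (F2 t) E1 = (1 / 2 : ℂ) • F2 t := by
  rw [F2_eq_smul, muS73_smul_left, muS73_F2_one_E1, smul_comm]

theorem muS73_F1_F2 (t : ℂ) : muS73 F1 (F2 t) = t • E1 := by
  rw [F2_eq_smul, muS73_smul_right, muS73_F1_F2_one]

theorem muS73_F2_F1 (t : ℂ) : muS73 (F2 t) F1 = -(t • E1) := by
  rw [F2_eq_smul, muS73_smul_left, muS73_F2_one_F1, smul_neg]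

theorem muS73_F2_F2 (t : ℂ) : muS73 (F2 t) (F2 t) = 0 := by
  rw [F2_eq_smul, muS73_smul_left, muS73_smul_right, muS73_F2_one_F2_one, smul_zero, smul_zero]

theorem tendsto_muS73_F1_F2 : Tendsto (fun t : ℂ => muS73 F1 (F2 t)) (nhds 0) (nhds 0) := by
  simp only [muS73_F1_F2]
  simpa using (tendsto_id (x := nhds (0 : ℂ))).smul_const E1

/-- The graded basis change E₁ = e₁, F₁ = f₁, F₂ᵗ = t·f₂ of S₇³ yields structure
constants converging as t → 0 to those of S₅³: E₁E₁ = E₁, E₁F₁ = ½F₁, E₁F₂ = ½F₂,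
F₁F₂ = 0; the only t-dependent product is F₁F₂ᵗ = t·E₁ → 0. -/
theorem degeneration_S73_to_S53 :
    (∀ t : ℂ, t ≠ 0 →
      muS73 E1 E1 = E1 ∧
      muS73 E1 F1 = (1 / 2 : ℂ) • F1 ∧ muS73 F1 E1 = (1 / 2 : ℂ) • F1 ∧
      muS73 E1 (F2 t) = (1 / 2 : ℂ) • F2 t ∧ muS73 (F2 t) E1 = (1 / 2 : ℂ) • F2 t ∧
      muS73 F1 (F2 t) = t • E1 ∧ muS73 (F2 t) F1 = -(t • E1) ∧
      muS73 F1 F1 = 0 ∧ muS73 (F2 t) (F2 t) = 0) ∧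
    Tendsto (fun t : ℂ => muS73 F1 (F2 t)) (nhdsWithin 0 {(0 : ℂ)}ᶜ) (nhds 0) :=
  ⟨fun t _ => ⟨muS73_E1_E1, muS73_E1_F1, muS73_F1_E1, muS73_E1_F2 t, muS73_F2_E1 t,
      muS73_F1_F2 t, muS73_F2_F1 t, muS73_F1_F1, muS73_F2_F2 t⟩,
    tendsto_muS73_F1_F2.mono_left nhdsWithin_le_nhds⟩
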